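/- Let (g, ·) be an algebra whose product is both Novikov and associative, with commutator bracket [x,y] = x·y - y·x. Then [[x,y],[z,t]] = 0 for all x, y, z, t; hence the induced Lie algebra is two-step solvable. -/

import Mathlib

theorem mul_mul_swap_right_of_novikov_assoc {R M : Type*} [CommSemiring R] [AddCommMonoid M]
    [Module R M] (mul : M →ₗ[R] M →ₗ[R] M)
    (hNov : ∀ x y z : M, mul (mul x y) z = mul (mul x z) y)
    (hassoc : ∀ x y z : M, mul (mul x y) z = mul x (mul y z)) (a b c : M) :
    mul a (mul b c) = mul a (mul c b) := by
  rw [← hassoc, hNov, hassoc]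

theorem mul_commutator_eq_zero_of_novikov_assoc {R M : Type*} [CommSemiring R] [AddCommGroup M]
    [Module R M] (mul : M →ₗ[R] M →ₗ[R] M)
    (hNov : ∀ x y z : M, mul (mul x y) z = mul (mul x z) y)
    (hassoc : ∀ x y z : M, mul (mul x y) z = mul x (mul y z)) (a b c : M) :
    mul a (mul b c - mul c b) = 0 := by
  rw [map_sub, mul_mul_swap_right_of_novikov_assoc mul hNov hassoc, sub_self]

theorem snla_stmt_6 (g : Type*) [AddCommGroup g] [Module ℝ g]
    (mul : g →ₗ[ℝ] g →ₗ[ℝ] g)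
    (hNov : ∀ x y z : g, mul (mul x y) z = mul (mul x z) y)
    (hassoc : ∀ x y z : g, mul (mul x y) z = mul x (mul y z)) :
    ∀ x y z t : g,
      mul (mul x y - mul y x) (mul z t - mul t z)
        - mul (mul z t - mul t z) (mul x y - mul y x) = 0 := by
  intro x y z t
  simp only [mul_commutator_eq_zero_of_novikov_assoc mul hNov hassoc, sub_self]
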